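/- arXiv:2408.13954 — 4 statements merged into one kernel-verified Lean document; each statement's English description precedes it below -/
import Mathlib

section
/- Define φ(t) = 5(3t+1)(3t+2) − 15(t+1)(3t+1)·√t·arctan(1/√t) for t > 0. Then φ(7/10) < 23/4. -/
open Real

lemma arctan_lb_aux : ∀ x : ℝ, 0 < x → x - x ^ 3 / 3 < Real.arctan x := by
  intro x hx
  have key : StrictMonoOn (fun y : ℝ => Real.arctan y - (y - y ^ 3 / 3)) (Set.Ici 0) := by
    apply strictMonoOn_of_deriv_pos (convex_Ici 0)
    · exact (Real.continuous_arctan.sub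
        (continuous_id.sub ((continuous_pow 3).div_const 3))).continuousOn
    · intro y hy
      rw [interior_Ici] at hy
      have hd : HasDerivAt (fun y : ℝ => Real.arctan y - (y - y ^ 3 / 3))
          (1 / (1 + y ^ 2) - (1 - 3 * y ^ 2 / 3)) y := by
        exact (Real.hasDerivAt_arctan y).sub
          ((hasDerivAt_id y).sub ((hasDerivAt_pow 3 y).div_const 3))
      rw [hd.deriv]
      have h1 : (0:ℝ) < 1 + y ^ 2 := by positivity
      have heq : 1 / (1 + y ^ 2) - (1 - 3 * y ^ 2 / 3) = y ^ 4 / (1 + y ^ 2) := by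
        field_simp; ring
      rw [heq]
      have : (0:ℝ) < y := hy
      positivity
  have h0 : (fun y : ℝ => Real.arctan y - (y - y ^ 3 / 3)) 0 <
      (fun y : ℝ => Real.arctan y - (y - y ^ 3 / 3)) x :=
    key (Set.self_mem_Ici) (Set.mem_Ici.mpr hx.le) hx
  simp only [Real.arctan_zero] at h0
  norm_num at h0
  linarith

theorem phi_lt (φ : ℝ → ℝ)
    (hφ : ∀ t > 0, φ t = 5 * (3 * t + 1) * (3 * t + 2)
      - 15 * (t + 1) * (3 * t + 1) * Real.sqrt t * Real.arctan (1 / Real.sqrt t)) :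
    φ (7 / 10) < 23 / 4 := by
  have h7 : (0:ℝ) < 7 / 10 := by norm_num
  rw [hφ _ h7]
  set s := Real.sqrt (7 / 10) with hs
  have hs2 : s ^ 2 = 7 / 10 := Real.sq_sqrt (by norm_num)
  have hspos : 0 < s := Real.sqrt_pos.mpr (by norm_num)
  have hsub : s < 0.83667 := by
    rw [hs, Real.sqrt_lt' (by norm_num)]; norm_num
  have hslb : 0.83666 < s := by
    rw [hs]
    exact Real.lt_sqrt_of_sq_lt (by norm_num)
  set u : ℝ := (1 - s) / (1 + s) with hu
  have h1s : (0:ℝ) < 1 + s := by linarith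
  have hupos : 0 < u := by
    apply div_pos <;> linarith
  have hult : (1:ℝ) * u < 1 := by
    rw [one_mul, hu, div_lt_one h1s]; linarith
  have hadd : Real.arctan 1 + Real.arctan u = Real.arctan ((1 + u) / (1 - 1 * u)) :=
    Real.arctan_add hult
  have hinv : (1 + u) / (1 - 1 * u) = 1 / s := by
    have hune : (1:ℝ) - 1 * u ≠ 0 := by
      have : u < 1 := by linarith [hult]
      intro h; rw [one_mul] at h; linarith
    rw [div_eq_div_iff hune hspos.ne', hu]
    field_simp
    ring
  have harct : Real.arctan (1 / s) = π / 4 + Real.arctan u := by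
    rw [← hinv, ← hadd, Real.arctan_one]
  -- bounds on u
  have hu1 : (0.088927:ℝ) < u := by
    rw [hu, lt_div_iff₀ h1s]; nlinarith
  have hu2 : u < 0.08894 := by
    rw [hu, div_lt_iff₀ h1s]; nlinarith
  -- lower bound on arctan u
  have hcube : u ^ 3 < 0.08894 ^ 3 := pow_lt_pow_left₀ hu2 hupos.le (by norm_num)
  have harcu : (0.088692:ℝ) < Real.arctan u := by
    have := arctan_lb_aux u hupos
    nlinarith
  -- pi bound
  have hpi : (3.141592:ℝ) < π := by
    have := Real.pi_gt_d6
    linarith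
  -- main product bound
  have hA : (0.873990:ℝ) < Real.arctan (1 / s) := by
    rw [harct]; linarith
  have hApos : (0:ℝ) < Real.arctan (1 / s) := by linarith
  have hmain : (0.73119:ℝ) < s * Real.arctan (1 / s) := by
    nlinarith
  nlinarith [hmain]
end

section
/- For every real t > 0, 2·∫₀¹ (z²+t)²·log(z²+t) dz = (32/15)·t²·√t·arctan(1/√t) + (t² + (2/3)t + 1/5)·log(t² + 2t + 1) − 4(120t² + 35t + 9)/225. -/
open Real

lemma deriv_aux (t : ℝ) (ht : 0 < t) (z : ℝ) :
    HasDerivAt (fun z : ℝ =>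
      (z^5/5 + 2*t*z^3/3 + t^2*z) * Real.log (z^2+t)
        - (2/25*z^5 + 14/45*t*z^3 + 16/15*t^2*z)
        + 16/15 * t^2 * Real.sqrt t * Real.arctan (z / Real.sqrt t))
      ((z ^ 2 + t) ^ 2 * Real.log (z ^ 2 + t)) z := by
  have hst : 0 < Real.sqrt t := Real.sqrt_pos.mpr ht
  have hts : Real.sqrt t * Real.sqrt t = t := Real.mul_self_sqrt ht.le
  have hz : 0 < z^2 + t := by positivity
  have h1 : HasDerivAt (fun z : ℝ => z^5/5 + 2*t*z^3/3 + t^2*z)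
      (z^4 + 2*t*z^2 + t^2) z := by
    have := (((hasDerivAt_pow 5 z).div_const 5).add
      (((hasDerivAt_pow 3 z).const_mul (2*t)).div_const 3)).add
      ((hasDerivAt_id z).const_mul (t^2))
    refine this.congr_deriv ?_
    push_cast; ring
  have h2 : HasDerivAt (fun z : ℝ => Real.log (z^2+t)) (2*z/(z^2+t)) z := by
    have := ((hasDerivAt_pow 2 z).add_const t).log hz.ne'
    convert this using 1
    push_cast; ring
  have h3 : HasDerivAt (fun z : ℝ => 2/25*z^5 + 14/45*t*z^3 + 16/15*t^2*z)
      (2/5*z^4 + 14/15*t*z^2 + 16/15*t^2) z := by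
    have := ((((hasDerivAt_pow 5 z).const_mul (2/25)).add
      ((hasDerivAt_pow 3 z).const_mul (14/45*t))).add
      ((hasDerivAt_id z).const_mul (16/15*t^2)))
    refine this.congr_deriv ?_
    push_cast; ring
  have h4 : HasDerivAt (fun z : ℝ => Real.arctan (z / Real.sqrt t))
      (1 / (1 + (z/Real.sqrt t)^2) * (1/Real.sqrt t)) z := by
    exact (Real.hasDerivAt_arctan (z / Real.sqrt t)).comp z
      ((hasDerivAt_id z).div_const (Real.sqrt t))
  have H := ((h1.mul h2).sub h3).add (h4.const_mul (16/15 * t^2 * Real.sqrt t))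
  refine H.congr_deriv ?_
  have h1t : 1 + (z/Real.sqrt t)^2 = (z^2+t)/t := by
    field_simp
    nlinarith [hts]
  rw [h1t]
  field_simp
  ring_nf

theorem entropy_integral (t : ℝ) (ht : 0 < t) :
    2 * ∫ z in (0:ℝ)..1, (z ^ 2 + t) ^ 2 * Real.log (z ^ 2 + t) =
      (32 / 15) * t ^ 2 * Real.sqrt t * Real.arctan (1 / Real.sqrt t)
        + (t ^ 2 + (2 / 3) * t + 1 / 5) * Real.log (t ^ 2 + 2 * t + 1)
        - 4 * (120 * t ^ 2 + 35 * t + 9) / 225 := by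
  have hcont : Continuous fun z : ℝ => (z ^ 2 + t) ^ 2 * Real.log (z ^ 2 + t) := by
    have h0 : Continuous fun z : ℝ => z ^ 2 + t := by continuity
    exact (h0.pow 2).mul (h0.log fun z => by positivity)
  rw [intervalIntegral.integral_eq_sub_of_hasDerivAt
    (fun z _ => deriv_aux t ht z) (hcont.intervalIntegrable 0 1)]
  have hlog : Real.log (t ^ 2 + 2 * t + 1) = 2 * Real.log (1 + t) := by
    have : t ^ 2 + 2 * t + 1 = (1 + t) ^ 2 := by ring
    rw [this, Real.log_pow]; push_cast; ring
  norm_num [Real.arctan_zero]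
  rw [hlog]
  ring
end

section
/- Fix an integer d ≥ 3 and a real β with −(2d−3)/(2d−4) ≤ β < −1/2. Define θ = −(d−2)/((d+1)(2β+1)) and τ = (2(d−2)β + 2d−3)/(4(d+1)). Then for all real numbers A and B, θ·(A² − ((d+1)β/(d−2) − (d−5)/(2(d−2)))·A·B + (β² + (d−3)/(d−2)·β + (d−3)/(2(d−2)))·B²) + (1−θ)·(A + B/2)² = (A+B)(A + B/2) − τ·B². -/
theorem bootstrap_identity (d : ℕ) (hd : 3 ≤ d) (β : ℝ)
    (hβ₁ : -(2 * (d : ℝ) - 3) / (2 * d - 4) ≤ β) (hβ₂ : β < -(1 / 2)) :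
    ∀ A B : ℝ,
      (-((d : ℝ) - 2) / ((d + 1) * (2 * β + 1))) *
          (A ^ 2 - ((d + 1) * β / (d - 2) - (d - 5) / (2 * (d - 2))) * A * B
            + (β ^ 2 + (d - 3) / (d - 2) * β + (d - 3) / (2 * (d - 2))) * B ^ 2)
        + (1 - (-((d : ℝ) - 2) / ((d + 1) * (2 * β + 1)))) * (A + B / 2) ^ 2
      = (A + B) * (A + B / 2)
        - ((2 * ((d : ℝ) - 2) * β + 2 * d - 3) / (4 * (d + 1))) * B ^ 2 := by
  intro A B
  have hd' : (3 : ℝ) ≤ (d : ℝ) := by exact_mod_cast hd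
  have h1 : ((d : ℝ) - 2) ≠ 0 := by linarith
  have h2 : ((d : ℝ) + 1) ≠ 0 := by linarith
  have h3 : (2 * β + 1) ≠ 0 := by linarith
  field_simp
  ring
end

section
/- Define ψ(t) = 2t²√t·arctan(1/√t) + (15/16)·(t² + (2/3)t + 1/5)·log((t² + 2t + 1)/(t² + (2/3)t + 1/5)) − (120t² + 35t + 9)/60 for t > 0. Then ψ(3/4) > 1/6, and consequently 1/ψ(3/4) < 6. -/
open Real

/-- Quadratic lower bound for arctan on `[1, ∞)`. -/
lemma arctan_quad_lb {x : ℝ} (hx : 1 ≤ x) :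
    Real.pi / 4 + (x - 1) / 2 - (x - 1) ^ 2 / 4 ≤ Real.arctan x := by
  set f : ℝ → ℝ := fun y => Real.arctan y - ((y - 1) / 2 - (y - 1) ^ 2 / 4) with hf
  have hder : ∀ y : ℝ, HasDerivAt f (1 / (1 + y ^ 2) - (1 / 2 - 2 * (y - 1) / 4)) y := by
    intro y
    have h1 : HasDerivAt (fun y : ℝ => y - 1) 1 y := (hasDerivAt_id y).sub_const 1
    have h2 : HasDerivAt (fun y : ℝ => (y - 1) ^ 2) (2 * (y - 1)) y := by
      simpa using h1.fun_pow 2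
    exact (Real.hasDerivAt_arctan y).sub ((h1.div_const 2).sub (h2.div_const 4))
  have hmono : MonotoneOn f (Set.Ici (1 : ℝ)) := by
    apply monotoneOn_of_deriv_nonneg (convex_Ici 1)
    · exact fun y _ => ((hder y).continuousAt).continuousWithinAt
    · exact fun y _ => ((hder y).differentiableAt).differentiableWithinAt
    · intro y hy
      rw [interior_Ici] at hy
      have hy1 : (1 : ℝ) < y := hy
      rw [(hder y).deriv]
      have h0 : (0 : ℝ) < 1 + y ^ 2 := by positivity
      rw [sub_nonneg, le_div_iff₀ h0]
      nlinarith [mul_nonneg (by linarith : (0:ℝ) ≤ y) (sq_nonneg (y - 1))]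
  have h1 : f 1 ≤ f x := hmono (by simp) (by simpa using hx) hx
  have hf1 : f 1 = Real.pi / 4 := by simp [hf, Real.arctan_one]
  rw [hf1] at h1
  simp only [hf] at h1
  linarith

/-- Numeric lower bound for `log (245/101)`. -/
lemma log_245_101_lb : (0.885896 : ℝ) ≤ Real.log (245 / 101) := by
  have key := Real.abs_log_sub_add_sum_range_le (x := 43 / 245) (by rw [abs_of_pos] <;> norm_num) 4
  have hsum : (∑ i ∈ Finset.range 4, ((43 : ℝ) / 245) ^ (i + 1) / (i + 1)) =
      43 / 245 + (43 / 245) ^ 2 / 2 + (43 / 245) ^ 3 / 3 + (43 / 245) ^ 4 / 4 := by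
    simp [Finset.sum_range_succ]
    norm_num
  rw [hsum] at key
  have habs : |(43 : ℝ) / 245| = 43 / 245 := by rw [abs_of_pos] <;> norm_num
  rw [habs] at key
  have h202 : (1 : ℝ) - 43 / 245 = 202 / 245 := by norm_num
  rw [h202] at key
  have hlog1 : Real.log ((202 : ℝ) / 245) ≤ -(0.19274947 : ℝ) := by
    have := abs_le.1 key
    have h2 := this.2
    nlinarith [h2]
  have hsplit : Real.log ((245 : ℝ) / 101) = Real.log 2 - Real.log (202 / 245) := by
    rw [← Real.log_div (by norm_num) (by norm_num)]
    norm_num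
  rw [hsplit]
  have h2 := Real.log_two_gt_d9
  linarith

theorem psi_bound (ψ : ℝ → ℝ)
    (hψ : ∀ t > 0, ψ t = 2 * t ^ 2 * Real.sqrt t * Real.arctan (1 / Real.sqrt t)
      + (15 / 16) * (t ^ 2 + (2 / 3) * t + 1 / 5)
          * Real.log ((t ^ 2 + 2 * t + 1) / (t ^ 2 + (2 / 3) * t + 1 / 5))
      - (120 * t ^ 2 + 35 * t + 9) / 60) :
    ψ (3 / 4) > 1 / 6 ∧ 1 / ψ (3 / 4) < 6 := by
  have hval := hψ (3 / 4) (by norm_num)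
  set s := Real.sqrt (3 / 4) with hs
  have hs2 : s ^ 2 = 3 / 4 := Real.sq_sqrt (by norm_num)
  have hspos : 0 < s := Real.sqrt_pos.2 (by norm_num)
  have hslb : (0.8660254 : ℝ) ≤ s := by nlinarith
  have hsub : s ≤ (0.8660255 : ℝ) := by nlinarith
  -- bounds on x = 1/s
  have hxlb : (1.1547003 : ℝ) ≤ 1 / s := by
    rw [le_div_iff₀ hspos]; nlinarith
  have hxub : 1 / s ≤ (1.1547006 : ℝ) := by
    rw [div_le_iff₀ hspos]; nlinarith
  have hx1 : (1 : ℝ) ≤ 1 / s := by linarith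
  -- arctan lower bound
  have hat : (0.8567640 : ℝ) ≤ Real.arctan (1 / s) := by
    have h := arctan_quad_lb hx1
    have hpi := Real.pi_gt_d6
    nlinarith [sq_nonneg (1 / s - 1)]
  -- log argument simplification
  have hlogarg : (((3:ℝ)/4) ^ 2 + 2 * (3/4) + 1) / ((3/4) ^ 2 + (2/3) * (3/4) + 1/5)
      = 245 / 101 := by norm_num
  rw [hlogarg] at hval
  have hL := log_245_101_lb
  -- assemble
  have hprod : (0.8660254 : ℝ) * 0.8567640 ≤ s * Real.arctan (1 / s) :=
    mul_le_mul hslb hat (by norm_num) hspos.le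
  have hA : (0.8347 : ℝ) ≤ 2 * (3/4 : ℝ) ^ 2 * s * Real.arctan (1 / s) := by
    nlinarith [hprod]
  have hmain : ψ (3 / 4) > 1 / 6 := by
    rw [hval]
    nlinarith [hA, hL]
  refine ⟨hmain, ?_⟩
  have h6 : (1 : ℝ) / ψ (3 / 4) < 1 / (1 / 6) := by
    apply one_div_lt_one_div_of_lt (by norm_num) hmain
  simpa using h6
end
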